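/- arXiv:1509.02716 — 2 statements merged into one kernel-verified Lean document; each statement's English description precedes it below -/
import Mathlib

section
/- Let h be the 5-dimensional real Lie algebra with nonzero brackets [X_1,X_2] = X_2, [X_1,X_3] = -X_3, [X_1,X_4] = -2X_4, [X_2,X_3] = -X_5, and θ^1,...,θ^5 the dual basis. Then H^2_{-3θ^1}(h) is one-dimensional, spanned by the class of θ^3∧θ^4. -/
open scoped BigOperators

/-- The space of real-valued `k`-cochains on `L` (as bare functions). -/
abbrev Cochain (L : Type*) (k : ℕ) := (Fin k → L) → ℝ

variable {L : Type*} [LieRing L] [LieAlgebra ℝ L]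

/-- A cochain is an alternating multilinear map, i.e. an element of `Hom(Λ^k g, ℝ)`. -/
def IsAltMap {k : ℕ} (θ : Cochain L k) : Prop :=
  ∃ f : AlternatingMap ℝ L ℝ (Fin k), ⇑f = θ

/-- The Chevalley–Eilenberg differential with trivial coefficients:
`(dθ)(X_0,…,X_k) = ∑_{p<q} (-1)^{p+q} θ([X_p,X_q],X_0,…,X̂_p,…,X̂_q,…,X_k)`. -/
def CEd : {k : ℕ} → Cochain L k → Cochain L (k + 1)
  | 0, _ => fun _ => 0
  | (k + 1), θ => fun X =>
      ∑ p : Fin (k + 2), ∑ q : Fin (k + 2),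
        if h : (p : ℕ) < (q : ℕ) then
          ((-1 : ℝ) ^ ((p : ℕ) + (q : ℕ))) *
            θ (Fin.cons ⁅X p, X q⁆
                (Fin.removeNth ⟨(p : ℕ), lt_of_lt_of_le h (Nat.lt_succ_iff.mp q.isLt)⟩
                  (Fin.removeNth q X)))
        else 0

/-- The wedge product `ω ∧ θ` of a 1-cochain with a `k`-cochain. -/
def oneWedge {k : ℕ} (ω : L → ℝ) (θ : Cochain L k) : Cochain L (k + 1) :=
  fun X => ∑ i : Fin (k + 1), ((-1 : ℝ) ^ (i : ℕ)) * ω (X i) * θ (Fin.removeNth i X)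

/-- The deformed differential `d_{λω} θ = dθ + λ ω ∧ θ`. -/
def dDef {k : ℕ} (lam : ℝ) (ω : L → ℝ) (θ : Cochain L k) : Cochain L (k + 1) :=
  CEd θ + lam • oneWedge ω θ

/-- The submodule of alternating multilinear `k`-cochains, i.e. `C^k(g,ℝ) = Hom(Λ^k g, ℝ)`. -/
def AltSub (L : Type*) [LieRing L] [LieAlgebra ℝ L] (k : ℕ) : Submodule ℝ (Cochain L k) where
  carrier := {θ | IsAltMap θ}
  add_mem' := by rintro θ₁ θ₂ ⟨f, rfl⟩ ⟨g, rfl⟩; exact ⟨f + g, rfl⟩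
  zero_mem' := ⟨0, rfl⟩
  smul_mem' := by rintro c θ ⟨f, rfl⟩; exact ⟨c • f, rfl⟩

/-- The Chevalley–Eilenberg differential as a linear map. -/
def CEdL (L : Type*) [LieRing L] [LieAlgebra ℝ L] (k : ℕ) :
    Cochain L k →ₗ[ℝ] Cochain L (k + 1) where
  toFun := CEd
  map_add' θ₁ θ₂ := by
    cases k with
    | zero => funext X; exact (zero_add (0:ℝ)).symm
    | succ k =>
      funext X
      show _ = CEd θ₁ X + CEd θ₂ X
      simp only [CEd, Pi.add_apply]
      rw [← Finset.sum_add_distrib]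
      refine Finset.sum_congr rfl fun p _ => ?_
      rw [← Finset.sum_add_distrib]
      refine Finset.sum_congr rfl fun q _ => ?_
      split_ifs <;> simp [mul_add]
  map_smul' c θ := by
    cases k with
    | zero => funext X; exact (smul_zero c).symm
    | succ k =>
      funext X
      show _ = c * CEd θ X
      simp only [CEd, Pi.smul_apply, smul_eq_mul]
      rw [Finset.mul_sum]
      refine Finset.sum_congr rfl fun p _ => ?_
      rw [Finset.mul_sum]
      refine Finset.sum_congr rfl fun q _ => ?_
      split_ifs with h
      · ring
      · exact (mul_zero c).symm

/-- The operator `θ ↦ ω ∧ θ` as a linear map. -/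
def oneWedgeL (L : Type*) [LieRing L] [LieAlgebra ℝ L] (ω : L → ℝ) (k : ℕ) :
    Cochain L k →ₗ[ℝ] Cochain L (k + 1) where
  toFun := oneWedge ω
  map_add' θ₁ θ₂ := by
    funext X
    simp [oneWedge, mul_add, Finset.sum_add_distrib]
  map_smul' c θ := by
    funext X
    simp only [oneWedge, Pi.smul_apply, smul_eq_mul, RingHom.id_apply]
    rw [Finset.mul_sum]
    exact Finset.sum_congr rfl fun i _ => by ring

/-- The deformed differential `d_{λω}` as a linear map. -/
noncomputable def dDefL (L : Type*) [LieRing L] [LieAlgebra ℝ L]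
    (lam : ℝ) (ω : L → ℝ) (k : ℕ) : Cochain L k →ₗ[ℝ] Cochain L (k + 1) :=
  CEdL L k + lam • oneWedgeL L ω k

/-- Deformed `k`-cocycles: alternating cochains with `d_{λω} θ = 0`. -/
noncomputable def Zdef (L : Type*) [LieRing L] [LieAlgebra ℝ L]
    (lam : ℝ) (ω : L → ℝ) (k : ℕ) : Submodule ℝ (Cochain L k) :=
  AltSub L k ⊓ LinearMap.ker (dDefL L lam ω k)

/-- Deformed `(k+1)`-coboundaries: images under `d_{λω}` of alternating `k`-cochains. -/
noncomputable def Bdef (L : Type*) [LieRing L] [LieAlgebra ℝ L]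
    (lam : ℝ) (ω : L → ℝ) (k : ℕ) : Submodule ℝ (Cochain L (k + 1)) :=
  Submodule.map (dDefL L lam ω k) (AltSub L k)

/-- The deformed cohomology `H^{k+1}_{λω}(g)` = closed forms modulo exact forms. -/
noncomputable abbrev Hdef (L : Type*) [LieRing L] [LieAlgebra ℝ L]
    (lam : ℝ) (ω : L → ℝ) (k : ℕ) :=
  Zdef L lam ω (k + 1) ⧸
    Submodule.comap (Zdef L lam ω (k + 1)).subtype (Bdef L lam ω k)

/-- The 1-cochain associated to a linear functional. -/
def c1 {L : Type*} (f : L → ℝ) : Cochain L 1 := fun X => f (X 0)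

/-- The wedge product `f ∧ g` of two 1-forms, as a 2-cochain. -/
def w2 {L : Type*} (f g : L → ℝ) : Cochain L 2 :=
  fun X => f (X 0) * g (X 1) - f (X 1) * g (X 0)

/-!
Write `z_{ij} = z(X_i, X_j)` for a deformed 2-cocycle `z`. Evaluating `d_{-3θ¹} z = 0` on the
triples `(X_1, X_2, X_a)`, `(X_1, X_a, X_5)` kills `z_{24}, z_{25}, z_{35}, z_{45}` and gives
`z_{15} = -3 z_{23}`. The remaining components are coboundaries:
`d θ² = -4 θ¹∧θ²`, `d θ³ = -2 θ¹∧θ³`, `d θ⁴ = -θ¹∧θ⁴`, `d θ⁵ = θ²∧θ³ - 3 θ¹∧θ⁵`,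
so `z ≡ z_{34} θ³∧θ⁴`. This class is nonzero since every coboundary `d η` vanishes on
`(X_3, X_4)`: `[X_3, X_4] = 0` and `θ¹(X_3) = θ¹(X_4) = 0`.
-/

section Differential

variable {L : Type*} [LieRing L] [LieAlgebra ℝ L]

lemma dDefL_one_apply (lam : ℝ) (ω : L → ℝ) (η : Cochain L 1) (X : Fin 2 → L) :
    dDefL L lam ω 1 η X =
      -η ![⁅X 0, X 1⁆] + lam * (ω (X 0) * η ![X 1] - ω (X 1) * η ![X 0]) := by
  obtain ⟨a, b, rfl⟩ : ∃ a b, X = ![a, b] := ⟨X 0, X 1, by ext i; fin_cases i <;> rfl⟩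
  have hrm : Fin.removeNth 1 ![a, b] = ![a] := by ext i; fin_cases i; rfl
  simp [dDefL, CEdL, oneWedgeL, CEd, oneWedge, Fin.sum_univ_two, hrm, sub_eq_add_neg]

lemma dDefL_two_apply (lam : ℝ) (ω : L → ℝ) (θ : Cochain L 2) (X : Fin 3 → L) :
    dDefL L lam ω 2 θ X =
      -θ ![⁅X 0, X 1⁆, X 2] + θ ![⁅X 0, X 2⁆, X 1] - θ ![⁅X 1, X 2⁆, X 0]
        + lam * (ω (X 0) * θ ![X 1, X 2] - ω (X 1) * θ ![X 0, X 2]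
          + ω (X 2) * θ ![X 0, X 1]) := by
  obtain ⟨a, b, c, rfl⟩ : ∃ a b c, X = ![a, b, c] :=
    ⟨X 0, X 1, X 2, by ext i; fin_cases i <;> rfl⟩
  have hrm₁ : Fin.removeNth 1 ![a, b, c] = ![a, c] := by ext i; fin_cases i <;> rfl
  have hrm₂ : Fin.removeNth 2 ![a, b, c] = ![a, b] := by ext i; fin_cases i <;> rfl
  have hcons : (Fin.cons ⁅b, c⁆ (Fin.removeNth 1 ![a, b]) : Fin 2 → L) = ![⁅b, c⁆, a] := by
    ext i; fin_cases i <;> rfl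
  simp [dDefL, CEdL, oneWedgeL, CEd, oneWedge, Fin.sum_univ_three, hrm₁, hrm₂, hcons]
  ring

end Differential

namespace AlternatingMap

variable {R M N : Type*} [CommRing R] [AddCommGroup M] [Module R M] [AddCommGroup N] [Module R N]

lemma map_vecCons_neg {n : ℕ} (f : M [⋀^Fin n.succ]→ₗ[R] N) (m : Fin n → M) (x : M) :
    f (Matrix.vecCons (-x) m) = -f (Matrix.vecCons x m) := by
  simpa using f.map_vecCons_smul m (-1) x

lemma map_fin_two_swap (f : M [⋀^Fin 2]→ₗ[R] N) (x y : M) : f ![y, x] = -f ![x, y] := by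
  have hswap : ![x, y] ∘ Equiv.swap (0 : Fin 2) 1 = ![y, x] := by
    ext i; fin_cases i <;> rfl
  rw [← hswap]
  exact f.map_swap ![x, y] (by decide)

end AlternatingMap

section Cochains

variable {L : Type*} [LieRing L] [LieAlgebra ℝ L]

lemma isAltMap_c1 (f : L →ₗ[ℝ] ℝ) : IsAltMap (c1 f) :=
  ⟨AlternatingMap.ofSubsingleton ℝ L ℝ 0 f, rfl⟩

lemma isAltMap_w2 (f g : L →ₗ[ℝ] ℝ) : IsAltMap (w2 f g) := by
  refine ⟨Matrix.detRowAlternating.compLinearMap (LinearMap.pi ![f, g]), ?_⟩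
  ext X
  change Matrix.det (Matrix.of fun i => LinearMap.pi ![f, g] (X i)) = _
  simp [Matrix.det_fin_two, w2, mul_comm]

lemma IsAltMap.ext_basis {ι : Type*} [LinearOrder ι] (E : Module.Basis ι ℝ L) {θ θ' : Cochain L 2}
    (hθ : IsAltMap θ) (hθ' : IsAltMap θ') (h : ∀ i j, i < j → θ ![E i, E j] = θ' ![E i, E j]) :
    θ = θ' := by
  obtain ⟨f, rfl⟩ := hθ
  obtain ⟨g, rfl⟩ := hθ'
  congr 1
  refine E.ext_alternating fun v hv => ?_
  have hv₂ : (fun k => E (v k)) = ![E (v 0), E (v 1)] := by ext k; fin_cases k <;> rfl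
  rw [hv₂]
  rcases lt_or_gt_of_ne (hv.ne (by decide : (0 : Fin 2) ≠ 1)) with hlt | hgt
  · exact h _ _ hlt
  · rw [f.map_fin_two_swap, g.map_fin_two_swap, h _ _ hgt]

lemma w2_coord_mem_altSub {ι : Type*} (E : Module.Basis ι ℝ L) (i j : ι) :
    w2 (fun v => E.repr v i) (fun v => E.repr v j) ∈ AltSub L 2 :=
  isAltMap_w2 (E.coord i) (E.coord j)

lemma w2_coord_not_mem_Bdef {ι : Type*} (E : Module.Basis ι ℝ L) (lam : ℝ) (ω : L → ℝ)
    {i j : ι} (hij : i ≠ j) (hlie : ⁅E i, E j⁆ = 0) (hωi : ω (E i) = 0) (hωj : ω (E j) = 0) :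
    w2 (fun v => E.repr v i) (fun v => E.repr v j) ∉ Bdef L lam ω 1 := by
  rintro ⟨_, ⟨η, rfl⟩, hη⟩
  have hij' := congrFun hη ![E i, E j]
  simp [dDefL_one_apply, hlie, hωi, hωj, η.map_coord_zero 0, w2, hij, hij.symm] at hij'

end Cochains

section Quotient

variable {K V : Type*} [Field K] [AddCommGroup V] [Module K V] {Z B : Submodule K V}

lemma Submodule.span_mk_eq_top_of_forall_sub_smul_mem (v : Z)
    (h : ∀ z : Z, ∃ c : K, (z : V) - c • (v : V) ∈ B) :
    span K {(Submodule.Quotient.mk v : Z ⧸ B.comap Z.subtype)} = ⊤ := by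
  refine eq_top_iff'.mpr fun q => ?_
  obtain ⟨z, rfl⟩ := Submodule.Quotient.mk_surjective _ q
  obtain ⟨c, hc⟩ := h z
  refine mem_span_singleton.mpr ⟨c, ?_⟩
  rw [← Submodule.Quotient.mk_smul, Submodule.Quotient.eq, ← neg_mem_iff, neg_sub]
  exact hc

end Quotient

/-- The brackets of `h` in the basis `X_1, …, X_5`, which is `E 0, …, E 4` here. -/
structure StructureRelations {H : Type*} [LieRing H] [LieAlgebra ℝ H]
    (E : Module.Basis (Fin 5) ℝ H) : Prop where
  lie_01 : ⁅E 0, E 1⁆ = E 1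
  lie_02 : ⁅E 0, E 2⁆ = -E 2
  lie_03 : ⁅E 0, E 3⁆ = (-2 : ℝ) • E 3
  lie_12 : ⁅E 1, E 2⁆ = -E 4
  lie_04 : ⁅E 0, E 4⁆ = 0
  lie_13 : ⁅E 1, E 3⁆ = 0
  lie_14 : ⁅E 1, E 4⁆ = 0
  lie_23 : ⁅E 2, E 3⁆ = 0
  lie_24 : ⁅E 2, E 4⁆ = 0
  lie_34 : ⁅E 3, E 4⁆ = 0

namespace StructureRelations

variable {H : Type*} [LieRing H] [LieAlgebra ℝ H] {E : Module.Basis (Fin 5) ℝ H}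

lemma lie_basis (hE : StructureRelations E) (i j : Fin 5) :
    ⁅E i, E j⁆ = ![![0, E 1, -E 2, (-2 : ℝ) • E 3, 0],
                   ![-E 1, 0, -E 4, 0, 0],
                   ![E 2, E 4, 0, 0, 0],
                   ![(2 : ℝ) • E 3, 0, 0, 0, 0],
                   ![0, 0, 0, 0, 0]] i j := by
  have skew {x y z : H} (h : ⁅x, y⁆ = z) : ⁅y, x⁆ = -z := by rw [← lie_skew, h]
  fin_cases i <;> fin_cases j <;>
    simp [skew, hE.lie_01, hE.lie_02, hE.lie_03, hE.lie_12, hE.lie_04, hE.lie_13, hE.lie_14,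
      hE.lie_23, hE.lie_24, hE.lie_34]

lemma repr_lie (hE : StructureRelations E) (x y : H) :
    ⇑(E.repr ⁅x, y⁆) = ![0, E.repr x 0 * E.repr y 1 - E.repr x 1 * E.repr y 0,
      E.repr x 2 * E.repr y 0 - E.repr x 0 * E.repr y 2,
      2 * (E.repr x 3 * E.repr y 0 - E.repr x 0 * E.repr y 3),
      E.repr x 2 * E.repr y 1 - E.repr x 1 * E.repr y 2] := by
  conv_lhs => rw [← E.sum_repr x, ← E.sum_repr y]
  simp only [Fin.sum_univ_five, add_lie, lie_add, smul_lie, lie_smul, map_add, map_smul,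
    hE.lie_basis]
  ext k
  fin_cases k <;> simp <;> ring

lemma dDefL_w2_two_three (hE : StructureRelations E) :
    dDefL H (-3) (fun v => E.repr v 0) 2 (w2 (fun v => E.repr v 2) (fun v => E.repr v 3)) = 0 := by
  ext X
  simp [dDefL_two_apply, w2, hE.repr_lie]
  ring

lemma dDefL_c1_linear_combination (hE : StructureRelations E) (a b c d : ℝ) :
    dDefL H (-3) (fun v => E.repr v 0) 1
        (c1 ⇑(a • E.coord 1 + b • E.coord 2 + c • E.coord 3 + d • E.coord 4)) =
      (-4 * a) • w2 (fun v => E.repr v 0) (fun v => E.repr v 1)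
        + (-2 * b) • w2 (fun v => E.repr v 0) (fun v => E.repr v 2)
        + (-c) • w2 (fun v => E.repr v 0) (fun v => E.repr v 3)
        + d • (w2 (fun v => E.repr v 1) (fun v => E.repr v 2)
          - (3 : ℝ) • w2 (fun v => E.repr v 0) (fun v => E.repr v 4)) := by
  ext X
  simp [dDefL_one_apply, c1, w2, hE.repr_lie]
  ring

lemma w2_two_three_mem_Zdef (hE : StructureRelations E) :
    w2 (fun v => E.repr v 2) (fun v => E.repr v 3) ∈ Zdef H (-3) (fun v => E.repr v 0) 2 :=
  ⟨w2_coord_mem_altSub E 2 3, hE.dDefL_w2_two_three⟩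

lemma cocycle_relations (hE : StructureRelations E) {z : Cochain H 2}
    (hz : z ∈ Zdef H (-3) (fun v => E.repr v 0) 2) :
    z ![E 1, E 3] = 0 ∧ z ![E 1, E 4] = 0 ∧ z ![E 2, E 4] = 0 ∧ z ![E 3, E 4] = 0 ∧
      z ![E 0, E 4] = -3 * z ![E 1, E 2] := by
  obtain ⟨⟨f, rfl⟩, hd⟩ := hz
  have hdz (X : Fin 3 → H) : dDefL H (-3) (fun v => E.repr v 0) 2 f X = 0 :=
    congrFun (LinearMap.mem_ker.mp hd) X
  have e013 := hdz ![E 0, E 1, E 3]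
  have e014 := hdz ![E 0, E 1, E 4]
  have e024 := hdz ![E 0, E 2, E 4]
  have e034 := hdz ![E 0, E 3, E 4]
  have e012 := hdz ![E 0, E 1, E 2]
  have hzero (x : H) : f ![0, x] = 0 := f.map_coord_zero 0 rfl
  simp [dDefL_two_apply, hE.lie_basis, AlternatingMap.map_vecCons_smul,
    AlternatingMap.map_vecCons_neg, hzero] at e013 e014 e024 e034 e012
  have s13 := f.map_fin_two_swap (E 1) (E 3)
  have s12 := f.map_fin_two_swap (E 1) (E 2)
  have s04 := f.map_fin_two_swap (E 0) (E 4)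
  refine ⟨by linarith, by linarith, by linarith, by linarith, by linarith⟩

open Submodule in
lemma sub_smul_mem_Bdef (hE : StructureRelations E) {z : Cochain H 2}
    (hz : z ∈ Zdef H (-3) (fun v => E.repr v 0) 2) :
    z - z ![E 2, E 3] • w2 (fun v => E.repr v 2) (fun v => E.repr v 3) ∈
      Bdef H (-3) (fun v => E.repr v 0) 1 := by
  obtain ⟨h13, h14, h24, h34, h04⟩ := hE.cocycle_relations hz
  refine ⟨_, isAltMap_c1 (-(z ![E 0, E 1] / 4) • E.coord 1 + -(z ![E 0, E 2] / 2) • E.coord 2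
    + -z ![E 0, E 3] • E.coord 3 + z ![E 1, E 2] • E.coord 4), ?_⟩
  rw [hE.dDefL_c1_linear_combination]
  have hw := w2_coord_mem_altSub E
  refine IsAltMap.ext_basis E ?_ ?_ fun i j hij => ?_
  · exact add_mem (add_mem (add_mem (smul_mem _ _ (hw 0 1)) (smul_mem _ _ (hw 0 2)))
      (smul_mem _ _ (hw 0 3))) (smul_mem _ _ (sub_mem (hw 1 2) (smul_mem _ _ (hw 0 4))))
  · exact sub_mem hz.1 (smul_mem _ _ (hw 2 3))
  · fin_cases i <;> fin_cases j <;> simp [w2] at hij ⊢ <;> linarith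

end StructureRelations

/-- `H^2_{-3θ^1}(h)` is one-dimensional, spanned by the class of
`θ^3 ∧ θ^4`. -/
theorem H2_deformed_neg_three
    (H : Type*) [LieRing H] [LieAlgebra ℝ H] (E : Module.Basis (Fin 5) ℝ H)
    (b01 : ⁅E 0, E 1⁆ = E 1) (b02 : ⁅E 0, E 2⁆ = -E 2)
    (b03 : ⁅E 0, E 3⁆ = (-2 : ℝ) • E 3) (b12 : ⁅E 1, E 2⁆ = -E 4)
    (b04 : ⁅E 0, E 4⁆ = 0) (b13 : ⁅E 1, E 3⁆ = 0) (b14 : ⁅E 1, E 4⁆ = 0)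
    (b23 : ⁅E 2, E 3⁆ = 0) (b24 : ⁅E 2, E 4⁆ = 0) (b34 : ⁅E 3, E 4⁆ = 0) :
    Module.finrank ℝ (Hdef H (-3) (fun v => E.repr v 0) 1) = 1 ∧
    ∃ hm : w2 (fun v => E.repr v 2) (fun v => E.repr v 3) ∈
        Zdef H (-3) (fun v => E.repr v 0) 2,
      Submodule.span ℝ
        {(Submodule.Quotient.mk
            (⟨w2 (fun v => E.repr v 2) (fun v => E.repr v 3), hm⟩ :
              Zdef H (-3) (fun v => E.repr v 0) 2) :
          Hdef H (-3) (fun v => E.repr v 0) 1)} = ⊤ := by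
  have hE : StructureRelations E := ⟨b01, b02, b03, b12, b04, b13, b14, b23, b24, b34⟩
  have hm := hE.w2_two_three_mem_Zdef
  have hspan := Submodule.span_mk_eq_top_of_forall_sub_smul_mem ⟨_, hm⟩
    fun z => ⟨_, hE.sub_smul_mem_Bdef z.2⟩
  refine ⟨(finrank_eq_one_iff_of_nonzero _ ?_).mpr hspan, hm, hspan⟩
  rw [Ne, Submodule.Quotient.mk_eq_zero]
  exact w2_coord_not_mem_Bdef E (-3) _ (by decide) b23 (by simp) (by simp)
end

section
/- Let h be the 5-dimensional real Lie algebra with Maurer–Cartan relations dθ^1=0, dθ^2=-θ^1∧θ^2, dθ^3=θ^1∧θ^3, dθ^4=2θ^1∧θ^4, dθ^5=θ^2∧θ^3. The 2-cochain θ^3∧θ^4 is d_{-3θ^1}-closed, i.e., d(θ^3∧θ^4) − 3 θ^1∧θ^3∧θ^4 = 0, but it is not in the image of d_{-3θ^1} : C^1(h,ℝ) → C^2(h,ℝ). -/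
open scoped BigOperators

variable {L : Type*} [LieRing L] [LieAlgebra ℝ L]

/-! Write `θ^i = E.repr · (i - 1)` for the coordinate forms. Then `dθ^3 = θ^1 ∧ θ^3` and
`dθ^4 = 2 θ^1 ∧ θ^4`, so by the Leibniz rule `d(θ^3 ∧ θ^4) = 3 θ^1 ∧ θ^3 ∧ θ^4`, which
`-3 θ^1 ∧ (θ^3 ∧ θ^4)` cancels. Since `X_3` and `X_4` commute and `θ^1` kills both, every
`d_{-3θ^1}`-exact 2-form vanishes on `(X_3, X_4)`, whereas `θ^3 ∧ θ^4` takes the value `1` there. -/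

theorem CEd_one_apply {𝔤 : Type*} [LieRing 𝔤] (θ : Cochain 𝔤 1) (X : Fin 2 → 𝔤) :
    CEd θ X = -θ ![⁅X 0, X 1⁆] := by
  have h₁ : Fin.tail (Fin.removeNth 1 X) = ![] := Subsingleton.elim _ _
  simp +decide only [CEd, Fin.sum_univ_succ, Fin.sum_univ_zero,
    Fin.succ_zero_eq_one, Fin.val_zero, Fin.val_one, dite_true, dite_false, add_zero, zero_add]
  simp [h₁]

theorem CEd_two_apply {𝔤 : Type*} [LieRing 𝔤] (θ : Cochain 𝔤 2) (X : Fin 3 → 𝔤) :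
    CEd θ X = -θ ![⁅X 0, X 1⁆, X 2] + θ ![⁅X 0, X 2⁆, X 1] - θ ![⁅X 1, X 2⁆, X 0] := by
  have h₁ : Fin.removeNth 1 X = ![X 0, X 2] := by ext i; fin_cases i <;> rfl
  have h₂ : Fin.removeNth 2 X = ![X 0, X 1] := by ext i; fin_cases i <;> rfl
  have h₃ : Fin.removeNth 1 ![X 0, X 1] = ![X 0] := by ext i; fin_cases i; rfl
  simp +decide only [CEd, Fin.sum_univ_succ, Fin.sum_univ_zero,
    Fin.succ_zero_eq_one, Fin.succ_one_eq_two, Fin.val_zero, Fin.val_one, Fin.val_two,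
    dite_true, dite_false, add_zero, zero_add, h₁, h₂]
  simp [h₃]
  ring

theorem oneWedge_one_apply {V : Type*} (ω : V → ℝ) (θ : Cochain V 1) (X : Fin 2 → V) :
    oneWedge ω θ X = ω (X 0) * θ ![X 1] - ω (X 1) * θ ![X 0] := by
  have h₀ : Fin.tail X = ![X 1] := by ext i; fin_cases i; rfl
  have h₁ : Fin.removeNth 1 X = ![X 0] := by ext i; fin_cases i; rfl
  simp [oneWedge, Fin.sum_univ_succ, h₀, h₁]
  ring

theorem oneWedge_two_apply {V : Type*} (ω : V → ℝ) (θ : Cochain V 2) (X : Fin 3 → V) :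
    oneWedge ω θ X =
      ω (X 0) * θ ![X 1, X 2] - ω (X 1) * θ ![X 0, X 2] + ω (X 2) * θ ![X 0, X 1] := by
  have h₀ : Fin.tail X = ![X 1, X 2] := by ext i; fin_cases i <;> rfl
  have h₁ : Fin.removeNth 1 X = ![X 0, X 2] := by ext i; fin_cases i <;> rfl
  have h₂ : Fin.removeNth 2 X = ![X 0, X 1] := by ext i; fin_cases i <;> rfl
  simp [oneWedge, Fin.sum_univ_succ, h₀, h₁, h₂]
  ring

theorem dDef_w2_eq_zero {𝔤 : Type*} [LieRing 𝔤] {ω f g : 𝔤 → ℝ} {a b lam : ℝ}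
    (hf : ∀ x y, f ⁅x, y⁆ = a * (f x * ω y - ω x * f y))
    (hg : ∀ x y, g ⁅x, y⁆ = b * (g x * ω y - ω x * g y)) (hlam : a + b + lam = 0) :
    dDef lam ω (w2 f g) = 0 := by
  funext X
  simp only [dDef, Pi.add_apply, Pi.smul_apply, smul_eq_mul, Pi.zero_apply, CEd_two_apply,
    oneWedge_two_apply, w2, Matrix.cons_val_zero, Matrix.cons_val_one, hf, hg]
  linear_combination (ω (X 0) * (f (X 1) * g (X 2) - f (X 2) * g (X 1))
    - ω (X 1) * (f (X 0) * g (X 2) - f (X 2) * g (X 0))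
    + ω (X 2) * (f (X 0) * g (X 1) - f (X 1) * g (X 0))) * hlam

theorem IsAltMap.apply_vec_zero {𝔤 : Type*} [LieRing 𝔤] [LieAlgebra ℝ 𝔤] {α : Cochain 𝔤 1}
    (hα : IsAltMap α) : α ![0] = 0 := by
  obtain ⟨φ, rfl⟩ := hα
  exact φ.map_coord_zero 0 rfl

theorem dDef_apply_eq_zero_of_lie_eq_zero {𝔤 : Type*} [LieRing 𝔤] [LieAlgebra ℝ 𝔤]
    {α : Cochain 𝔤 1} (hα : IsAltMap α) (lam : ℝ) {ω : 𝔤 → ℝ} {x y : 𝔤} (hxy : ⁅x, y⁆ = 0)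
    (hx : ω x = 0) (hy : ω y = 0) : dDef lam ω α ![x, y] = 0 := by
  simp [dDef, CEd_one_apply, oneWedge_one_apply, hxy, hx, hy, hα.apply_vec_zero]

theorem Module.Basis.map_lie_eq_of_lt {R ι 𝔤 : Type*} [CommRing R] [LinearOrder ι] [LieRing 𝔤]
    [LieAlgebra R 𝔤] (E : Module.Basis ι R 𝔤) (f ω : 𝔤 →ₗ[R] R) (a : R)
    (h : ∀ i j, i < j → f ⁅E i, E j⁆ = a * (f (E i) * ω (E j) - ω (E i) * f (E j)))
    (x y : 𝔤) : f ⁅x, y⁆ = a * (f x * ω y - ω x * f y) := by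
  let B : 𝔤 →ₗ[R] 𝔤 →ₗ[R] R := (LieAlgebra.ad R 𝔤 : 𝔤 →ₗ[R] Module.End R 𝔤).compr₂ f
  let W : 𝔤 →ₗ[R] 𝔤 →ₗ[R] R :=
    a • (LinearMap.mul R R).compl₁₂ f ω - a • (LinearMap.mul R R).compl₁₂ ω f
  have hBW : B = W := by
    refine LinearMap.ext_basis E E fun i j => ?_
    simp only [B, W, LinearMap.compr₂_apply, LieHom.coe_toLinearMap, LieAlgebra.ad_apply,
      LinearMap.sub_apply, LinearMap.smul_apply, LinearMap.compl₁₂_apply, LinearMap.mul_apply',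
      smul_eq_mul]
    rcases lt_trichotomy i j with hij | rfl | hji
    · rw [h i j hij]; ring
    · rw [lie_self, map_zero]; ring
    · rw [← lie_skew, map_neg, h j i hji]; ring
  simpa [B, W, mul_sub] using LinearMap.congr_fun₂ hBW x y

/-- `θ^3∧θ^4` is `d_{-3θ^1}`-closed but not in the image of
`d_{-3θ^1} : C^1(h,ℝ) → C^2(h,ℝ)`. -/
theorem theta34_closed_not_exact
    (H : Type*) [LieRing H] [LieAlgebra ℝ H] (E : Module.Basis (Fin 5) ℝ H)
    (b01 : ⁅E 0, E 1⁆ = E 1) (b02 : ⁅E 0, E 2⁆ = -E 2)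
    (b03 : ⁅E 0, E 3⁆ = (-2 : ℝ) • E 3) (b12 : ⁅E 1, E 2⁆ = -E 4)
    (b04 : ⁅E 0, E 4⁆ = 0) (b13 : ⁅E 1, E 3⁆ = 0) (b14 : ⁅E 1, E 4⁆ = 0)
    (b23 : ⁅E 2, E 3⁆ = 0) (b24 : ⁅E 2, E 4⁆ = 0) (b34 : ⁅E 3, E 4⁆ = 0) :
    dDef (-3) (fun v => E.repr v 0)
        (w2 (fun v => E.repr v 2) (fun v => E.repr v 3)) = 0 ∧
    ∀ α : Cochain H 1, IsAltMap α →
      dDef (-3) (fun v => E.repr v 0) α ≠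
        w2 (fun v => E.repr v 2) (fun v => E.repr v 3) := by
  have dθ3 : ∀ x y : H,
      E.repr ⁅x, y⁆ 2 = 1 * (E.repr x 2 * E.repr y 0 - E.repr x 0 * E.repr y 2) := by
    refine E.map_lie_eq_of_lt (E.coord 2) (E.coord 0) 1 fun i j hij => ?_
    fin_cases i <;> fin_cases j <;> simp_all
  have dθ4 : ∀ x y : H,
      E.repr ⁅x, y⁆ 3 = 2 * (E.repr x 3 * E.repr y 0 - E.repr x 0 * E.repr y 3) := by
    refine E.map_lie_eq_of_lt (E.coord 3) (E.coord 0) 2 fun i j hij => ?_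
    fin_cases i <;> fin_cases j <;> simp_all
  refine ⟨dDef_w2_eq_zero dθ3 dθ4 (by norm_num), fun α hα hexact => ?_⟩
  have h34 := congrFun hexact ![E 2, E 3]
  rw [dDef_apply_eq_zero_of_lie_eq_zero hα (-3) b23 (by simp) (by simp)] at h34
  simp [w2] at h34
end
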